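/- Degree distribution in the links and Z-stars SUGM: fix integers n > Z ≥ 2 and parameters β_L, β_Z ∈ [0,1]. Suppose each of the C(n,2) links forms independently with probability β_L and each of the n·C(n−1,Z) possible Z-stars (an ordered choice of a center node and a set of Z leaves, creating the Z center–leaf edges) forms independently with probability β_Z; the observed graph has an edge between i and j iff the link ij formed directly or some formed star has one of i,j as center and the other as leaf. Then for every node i and every integer d with 0 ≤ d < Z, the probability that i has degree exactly d in the observed graph equals C(n−1,d)·π^d·(1−π)^{n−1−d}·(1−β_Z)^{C(n−1,Z)}, where π = β_L + (1−β_L)(1−(1−β_Z)^{C(n−2,Z−1)}). -/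

import Mathlib

open MeasureTheory

/-- A Bernoulli measure on `Bool` with success probability `p`. -/
noncomputable def bern (p : ℝ) : Measure Bool :=
  ENNReal.ofReal p • Measure.dirac true + ENNReal.ofReal (1 - p) • Measure.dirac false

/-- Sample space of the links and `Z`-stars SUGM on `n` nodes: one Boolean coordinate for
every potential direct link (a set of nodes, relevant when it has two elements) and one
for every potential star (a center node together with a set of leaves, relevant when the
set has `Z` elements not containing the center). -/
abbrev StarOmega (n : ℕ) := (Finset (Fin n) ⊕ Fin n × Finset (Fin n)) → Bool

/-- The links and `Z`-stars SUGM: every link coordinate is an independent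
Bernoulli(`βL`) and every star coordinate an independent Bernoulli(`βZ`). -/
noncomputable def starSugm (n : ℕ) (βL βZ : ℝ) : Measure (StarOmega n) :=
  Measure.pi fun x => Sum.elim (fun _ => bern βL) (fun _ => bern βZ) x

/-- The observed graph of the links and `Z`-stars model: `i` and `j` are adjacent iff the
direct link `{i,j}` formed, or some formed `Z`-star has one of them as center and the
other as a leaf. -/
def starEdge {n : ℕ} (Z : ℕ) (ω : StarOmega n) (i j : Fin n) : Bool :=
  ω (Sum.inl {i, j}) ||
    decide (∃ s : Finset (Fin n),
      s.card = Z ∧ i ∉ s ∧ j ∈ s ∧ ω (Sum.inr (i, s)) = true) ||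
    decide (∃ s : Finset (Fin n),
      s.card = Z ∧ j ∉ s ∧ i ∈ s ∧ ω (Sum.inr (j, s)) = true)

/-- The degree of node `i` in the observed graph. -/
def starDegree {n : ℕ} (Z : ℕ) (ω : StarOmega n) (i : Fin n) : ℕ :=
  (Finset.univ.filter fun j => j ≠ i ∧ starEdge Z ω i j = true).card


/-!
If `d < Z`, degree `d` rules out every `Z`-star centred at `i`, since one such star already
gives `i` degree `Z`. Without such stars, `i ~ j` exactly when the link `ij` or a star centred
at `j` with leaf `i` formed. These off-centre edge events and the event "no star at `i`" read
pairwise disjoint blocks of coordinates of the product space, so they are independent: each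
off-centre edge has probability `π`, the star-free event `(1 - βZ) ^ C(n-1, Z)`, and summing
over the `C(n-1, d)` possible neighbourhoods of `i` gives the formula.
-/

open ProbabilityTheory Set

section Fiberwise

variable {K B : Type*} [Fintype K] [Fintype B] [DecidableEq B] {α : Type*} [MeasurableSpace α]
  (ν : K → Measure α) (b : K → B)

theorem measurePreserving_restrict_fibers [∀ k, SigmaFinite (ν k)] :
    MeasurePreserving (fun ω β (k : {k // b k = β}) => ω k) (Measure.pi ν)
      (Measure.pi fun β => Measure.pi fun k : {k // b k = β} => ν k) where
  measurable :=
    measurable_pi_lambda _ fun _ => measurable_pi_lambda _ fun _ => measurable_pi_apply _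
  map_eq := by
    refine (Measure.pi_eq_generateFrom (fun _ => generateFrom_pi) (fun _ => isPiSystem_pi)
      (fun β => Measure.FiniteSpanningSetsIn.pi fun k : {k // b k = β} =>
        (ν k).toFiniteSpanningSetsIn) ?_).symm
    intro s hs
    choose t ht hst using hs
    have hbox : (fun ω β (k : {k // b k = β}) => ω k) ⁻¹' univ.pi s
        = univ.pi fun k => t (b k) ⟨k, rfl⟩ := by
      ext ω
      simp only [← hst, mem_preimage, mem_univ_pi, Subtype.forall]
      exact ⟨fun h k => h _ k rfl, fun h β k hk => by subst hk; exact h k⟩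
    rw [Measure.map_apply (by fun_prop) (MeasurableSet.univ_pi fun β => hst β ▸
      MeasurableSet.univ_pi fun k => ht β k (mem_univ k)), hbox, Measure.pi_pi,
      ← Fintype.prod_fiberwise b]
    refine Finset.prod_congr rfl fun β _ => ?_
    rw [← hst, Measure.pi_pi]
    exact Finset.prod_congr rfl fun ⟨k, hk⟩ _ => by subst hk; rfl

theorem iIndepFun_restrict_fibers [∀ k, IsProbabilityMeasure (ν k)] :
    iIndepFun (fun β ω (k : {k // b k = β}) => ω k) (Measure.pi ν) := by
  have hpres := measurePreserving_restrict_fibers ν b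
  refine (iIndepFun_iff_map_fun_eq_pi_map (f := fun β (ω : K → α) (k : {k // b k = β}) => ω k)
    fun β => (measurable_pi_lambda _ fun k => measurable_pi_apply _).aemeasurable).2 ?_
  rw [hpres.map_eq]
  congr 1
  funext β
  exact ((measurePreserving_eval _ β).comp hpres).map_eq.symm

theorem measure_pi_iInter_of_dependsOn [Countable α] [MeasurableSingletonClass α]
    [∀ k, IsProbabilityMeasure (ν k)] (E : B → Set (K → α))
    (hE : ∀ β, DependsOn (· ∈ E β) {k | b k = β}) :
    Measure.pi ν (⋂ β, E β) = ∏ β, Measure.pi ν (E β) := by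
  have hpre : ∀ β, (fun ω (k : {k // b k = β}) => ω k) ⁻¹'
      ((fun ω (k : {k // b k = β}) => ω k) '' E β) = E β := by
    intro β
    refine Subset.antisymm ?_ (subset_preimage_image _ _)
    rintro ω ⟨ω', hω', hX⟩
    have : (ω' ∈ E β) = (ω ∈ E β) := hE β fun k hk => congrFun hX ⟨k, hk⟩
    exact this ▸ hω'
  have h := (iIndepFun_restrict_fibers ν b).measure_inter_preimage_eq_mul Finset.univ
    (sets := fun β => (fun ω (k : {k // b k = β}) => ω k) '' E β)
    fun _ _ => (Set.to_countable _).measurableSet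
  simpa only [Finset.mem_univ, iInter_true, hpre] using h

end Fiberwise

open Finset

theorem measure_inter_setOf_card_filter_eq {Ω ι : Type*} [MeasurableSpace Ω]
    [DiscreteMeasurableSpace Ω] (μ : Measure Ω) (C : Set Ω) (s : Finset ι)
    (A : ι → Set Ω) [∀ j, DecidablePred (· ∈ A j)] (d : ℕ) :
    μ (C ∩ {ω | #{j ∈ s | ω ∈ A j} = d})
      = ∑ D ∈ s.powersetCard d, μ (C ∩ {ω | ∀ j ∈ s, ω ∈ A j ↔ j ∈ D}) := by
  have hpattern : ∀ ω, ∀ D ⊆ s, (∀ j ∈ s, ω ∈ A j ↔ j ∈ D) ↔ {j ∈ s | ω ∈ A j} = D := by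
    intro ω D hD
    constructor
    · intro h
      ext j
      simp only [mem_filter]
      exact ⟨fun hj => (h j hj.1).mp hj.2, fun hj => ⟨hD hj, (h j (hD hj)).mpr hj⟩⟩
    · rintro rfl j hj
      simp [hj]
  have hunion : C ∩ {ω | #{j ∈ s | ω ∈ A j} = d}
      = ⋃ D ∈ s.powersetCard d, C ∩ {ω | ∀ j ∈ s, ω ∈ A j ↔ j ∈ D} := by
    ext ω
    simp only [mem_inter_iff, mem_ofPred_eq, mem_iUnion, mem_powersetCard, exists_prop]
    constructor
    · rintro ⟨hC, hd⟩
      exact ⟨_, ⟨filter_subset _ _, hd⟩, hC, (hpattern ω _ (filter_subset _ _)).mpr rfl⟩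
    · rintro ⟨D, ⟨hD, rfl⟩, hC, h⟩
      exact ⟨hC, by rw [(hpattern ω D hD).mp h]⟩
  rw [hunion, measure_biUnion_finset _ fun D _ => MeasurableSet.of_discrete]
  intro D hD D' hD' hne
  refine Set.disjoint_left.mpr fun ω hω hω' => hne ?_
  rw [← (hpattern ω D (mem_powersetCard.mp hD).1).mp hω.2,
    (hpattern ω D' (mem_powersetCard.mp hD').1).mp hω'.2]

theorem measure_pi_setOf_forall_mem_eq {K α : Type*} [Fintype K] [DecidableEq K]
    [MeasurableSpace α] (ν : K → Measure α) [∀ k, IsProbabilityMeasure (ν k)]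
    (T : Finset K) (a : α) :
    Measure.pi ν {ω | ∀ k ∈ T, ω k = a} = ∏ k ∈ T, ν k {a} := by
  have hbox : {ω : K → α | ∀ k ∈ T, ω k = a}
      = Set.univ.pi fun k => if k ∈ T then {a} else Set.univ := by
    ext ω
    simp only [mem_ofPred_eq, mem_univ_pi]
    refine ⟨fun h k => ?_, fun h k hk => by simpa [hk] using h k⟩
    split_ifs with hk
    exacts [h k hk, mem_univ _]
  rw [hbox, Measure.pi_pi]
  simp only [apply_ite, measure_univ, Finset.prod_ite_mem, Finset.univ_inter]

theorem mem_powersetCard_univ_erase {α : Type*} [Fintype α] [DecidableEq α] {Z : ℕ} {i : α}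
    {s : Finset α} : s ∈ powersetCard Z (univ.erase i) ↔ #s = Z ∧ i ∉ s := by
  simp [mem_powersetCard, subset_erase, and_comm]

theorem bern_singleton_false (p : ℝ) : bern p {false} = ENNReal.ofReal (1 - p) := by
  simp [bern]

theorem isProbabilityMeasure_bern {p : ℝ} (hp : p ∈ Icc (0 : ℝ) 1) :
    IsProbabilityMeasure (bern p) := by
  constructor
  rw [bern, Measure.add_apply, Measure.smul_apply, Measure.smul_apply, measure_univ,
    measure_univ, smul_eq_mul, smul_eq_mul, mul_one, mul_one,
    ← ENNReal.ofReal_add hp.1 (by linarith [hp.2]), add_sub_cancel, ENNReal.ofReal_one]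

section StarModel

variable {n : ℕ}

def starFree (Z : ℕ) (i : Fin n) : Set (StarOmega n) :=
  {ω | ∀ s ∈ powersetCard Z (univ.erase i), ω (.inr (i, s)) = false}

def offCenterEdge (Z : ℕ) (i j : Fin n) : Set (StarOmega n) :=
  {ω | ω (.inl {i, j}) = true ∨
    ∃ s ∈ powersetCard Z (univ.erase j), i ∈ s ∧ ω (.inr (j, s)) = true}

instance (Z : ℕ) (i j : Fin n) : DecidablePred (· ∈ offCenterEdge Z i j) :=
  fun _ => inferInstanceAs (Decidable (_ ∨ _))

/-- Block `j ≠ i` holds the link `{i, j}` and the stars centred at `j`, block `i` the stars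
centred at `i`; the other links, which no event below reads, land anywhere. -/
def starBlock (i : Fin n) : Finset (Fin n) ⊕ Fin n × Finset (Fin n) → Fin n
  | .inl t => (t.erase i).max.unbotD i
  | .inr (j, _) => j

theorem starBlock_inl_pair {i j : Fin n} (hj : j ≠ i) : starBlock i (.inl {i, j}) = j := by
  simp [starBlock, Finset.erase_insert (Finset.notMem_singleton.mpr hj.symm)]

theorem dependsOn_starFree (Z : ℕ) (i : Fin n) :
    DependsOn (· ∈ starFree Z i) {k | starBlock i k = i} := by
  intro ω ω' h
  have hstar : ∀ s, ω (.inr (i, s)) = ω' (.inr (i, s)) := fun s => h _ rfl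
  simp only [starFree, mem_ofPred_eq, hstar]

theorem dependsOn_offCenterEdge (Z : ℕ) {i j : Fin n} (hj : j ≠ i) :
    DependsOn (· ∈ offCenterEdge Z i j) {k | starBlock i k = j} := by
  intro ω ω' h
  have hstar : ∀ s, ω (.inr (j, s)) = ω' (.inr (j, s)) := fun s => h _ rfl
  simp only [offCenterEdge, mem_ofPred_eq, hstar, h (.inl {i, j}) (starBlock_inl_pair hj)]

theorem isProbabilityMeasure_starSugm_coord {βL βZ : ℝ} (hβL : βL ∈ Icc (0 : ℝ) 1)
    (hβZ : βZ ∈ Icc (0 : ℝ) 1) (x : Finset (Fin n) ⊕ Fin n × Finset (Fin n)) :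
    IsProbabilityMeasure (Sum.elim (fun _ => bern βL) (fun _ => bern βZ) x) := by
  cases x
  exacts [isProbabilityMeasure_bern hβL, isProbabilityMeasure_bern hβZ]

theorem isProbabilityMeasure_starSugm {βL βZ : ℝ} (hβL : βL ∈ Icc (0 : ℝ) 1)
    (hβZ : βZ ∈ Icc (0 : ℝ) 1) : IsProbabilityMeasure (starSugm n βL βZ) := by
  have := isProbabilityMeasure_starSugm_coord (n := n) hβL hβZ
  rw [starSugm]
  infer_instance

theorem starSugm_starFree {βL βZ : ℝ} (hβL : βL ∈ Icc (0 : ℝ) 1) (hβZ : βZ ∈ Icc (0 : ℝ) 1)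
    (Z : ℕ) (i : Fin n) :
    starSugm n βL βZ (starFree Z i) = ENNReal.ofReal (1 - βZ) ^ (n - 1).choose Z := by
  have := isProbabilityMeasure_starSugm_coord (n := n) hβL hβZ
  have hT : starFree Z i = {ω | ∀ k ∈ (powersetCard Z (univ.erase i)).image
      (fun s => .inr (i, s)), ω k = false} := by
    ext ω
    simp only [starFree, mem_ofPred_eq, Finset.forall_mem_image]
  rw [hT, starSugm, measure_pi_setOf_forall_mem_eq,
    prod_image fun s _ t _ h => by simpa using h]
  simp [bern_singleton_false, card_powersetCard]

/-- `π` in the statement. -/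
noncomputable def offCenterEdgeProb (n Z : ℕ) (βL βZ : ℝ) : ℝ :=
  βL + (1 - βL) * (1 - (1 - βZ) ^ (n - 2).choose (Z - 1))

theorem one_sub_offCenterEdgeProb (n Z : ℕ) (βL βZ : ℝ) :
    1 - offCenterEdgeProb n Z βL βZ = (1 - βL) * (1 - βZ) ^ (n - 2).choose (Z - 1) := by
  rw [offCenterEdgeProb]
  ring

theorem starSugm_compl_offCenterEdge {βL βZ : ℝ} (hβL : βL ∈ Icc (0 : ℝ) 1)
    (hβZ : βZ ∈ Icc (0 : ℝ) 1) {Z : ℕ} (hZ : 1 ≤ Z) {i j : Fin n} (hj : j ≠ i) :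
    starSugm n βL βZ (offCenterEdge Z i j)ᶜ
      = ENNReal.ofReal (1 - offCenterEdgeProb n Z βL βZ) := by
  rw [one_sub_offCenterEdgeProb]
  have := isProbabilityMeasure_starSugm_coord (n := n) hβL hβZ
  have hT : (offCenterEdge Z i j)ᶜ = {ω | ∀ k ∈ insert (.inl {i, j})
      ({s ∈ powersetCard Z (univ.erase j) | {i} ⊆ s}.image fun s => .inr (j, s)),
      ω k = false} := by
    ext ω
    simp only [offCenterEdge, mem_compl_iff, mem_ofPred_eq, Finset.forall_mem_insert,
      Finset.forall_mem_image, Finset.mem_filter, Finset.singleton_subset_iff, not_or,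
      not_exists, not_and, Bool.not_eq_true, and_imp]
  have hcard : #{s ∈ powersetCard Z (univ.erase j) | {i} ⊆ s} = (n - 2).choose (Z - 1) := by
    rw [card_filter_powersetCard_subset _ _ _ (by simpa using hj.symm) (by simpa using hZ)]
    simp [Nat.sub_sub]
  rw [hT, starSugm, measure_pi_setOf_forall_mem_eq, prod_insert (by simp),
    prod_image fun s _ t _ h => by simpa using h]
  simp only [Sum.elim_inl, Sum.elim_inr, bern_singleton_false, prod_const, hcard]
  rw [ENNReal.ofReal_mul (by linarith [hβL.2]), ENNReal.ofReal_pow (by linarith [hβZ.2])]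

theorem starSugm_offCenterEdge {βL βZ : ℝ} (hβL : βL ∈ Icc (0 : ℝ) 1)
    (hβZ : βZ ∈ Icc (0 : ℝ) 1) {Z : ℕ} (hZ : 1 ≤ Z) {i j : Fin n} (hj : j ≠ i) :
    starSugm n βL βZ (offCenterEdge Z i j) = ENNReal.ofReal (offCenterEdgeProb n Z βL βZ) := by
  have := isProbabilityMeasure_starSugm (n := n) hβL hβZ
  have hq : 0 ≤ 1 - offCenterEdgeProb n Z βL βZ := by
    rw [one_sub_offCenterEdgeProb]
    exact mul_nonneg (by linarith [hβL.2]) (pow_nonneg (by linarith [hβZ.2]) _)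
  rw [← compl_compl (offCenterEdge Z i j), prob_compl_eq_one_sub MeasurableSet.of_discrete,
    starSugm_compl_offCenterEdge hβL hβZ hZ hj, ← ENNReal.ofReal_one,
    ← ENNReal.ofReal_sub _ hq, sub_sub_cancel]

theorem starEdge_eq_true_iff {Z : ℕ} {ω : StarOmega n} {i j : Fin n} (hω : ω ∈ starFree Z i) :
    starEdge Z ω i j = true ↔ ω ∈ offCenterEdge Z i j := by
  have hcenter : ¬ ∃ s : Finset (Fin n), #s = Z ∧ i ∉ s ∧ j ∈ s ∧ ω (.inr (i, s)) = true :=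
    fun ⟨s, hs, hi, _, h⟩ => by simp [hω s (mem_powersetCard_univ_erase.mpr ⟨hs, hi⟩)] at h
  simp only [starEdge, offCenterEdge, Bool.or_eq_true, decide_eq_true_eq, hcenter, or_false,
    mem_ofPred_eq, mem_powersetCard_univ_erase, and_assoc]

theorem mem_starFree_of_starDegree_lt {Z : ℕ} {ω : StarOmega n} {i : Fin n}
    (h : starDegree Z ω i < Z) : ω ∈ starFree Z i := by
  intro s hs
  rw [mem_powersetCard_univ_erase] at hs
  by_contra hstar
  have hleaves : s ⊆ ({j | j ≠ i ∧ starEdge Z ω i j = true} : Finset (Fin n)) := fun j hj => by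
    simp only [Finset.mem_filter, Finset.mem_univ, true_and, starEdge, Bool.or_eq_true,
      decide_eq_true_eq]
    exact ⟨fun hji => hs.2 (hji ▸ hj), Or.inl (Or.inr ⟨s, hs.1, hs.2, hj, by simpa using hstar⟩)⟩
  have hcard := Finset.card_le_card hleaves
  rw [hs.1] at hcard
  exact hcard.not_gt h

theorem starDegree_eq_card_offCenterEdge {Z : ℕ} {ω : StarOmega n} {i : Fin n}
    (hω : ω ∈ starFree Z i) :
    starDegree Z ω i = #{j ∈ univ.erase i | ω ∈ offCenterEdge Z i j} := by
  rw [starDegree]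
  congr 1
  ext j
  simp [starEdge_eq_true_iff hω]

theorem setOf_starDegree_eq {Z d : ℕ} (hd : d < Z) (i : Fin n) :
    {ω | starDegree Z ω i = d}
      = starFree Z i ∩ {ω | #{j ∈ univ.erase i | ω ∈ offCenterEdge Z i j} = d} := by
  ext ω
  constructor
  · intro h
    have hω := mem_starFree_of_starDegree_lt (h.symm ▸ hd : starDegree Z ω i < Z)
    exact ⟨hω, (starDegree_eq_card_offCenterEdge hω).symm.trans h⟩
  · rintro ⟨hω, h⟩
    exact (starDegree_eq_card_offCenterEdge hω).trans h

theorem starSugm_starFree_inter_pattern_eq_mul_prod {βL βZ : ℝ} (hβL : βL ∈ Icc (0 : ℝ) 1)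
    (hβZ : βZ ∈ Icc (0 : ℝ) 1) (Z : ℕ) (i : Fin n) (D : Finset (Fin n)) :
    starSugm n βL βZ (starFree Z i ∩ {ω | ∀ j ∈ univ.erase i, ω ∈ offCenterEdge Z i j ↔ j ∈ D})
      = starSugm n βL βZ (starFree Z i) *
        ∏ j ∈ univ.erase i, starSugm n βL βZ {ω | ω ∈ offCenterEdge Z i j ↔ j ∈ D} := by
  have := isProbabilityMeasure_starSugm_coord (n := n) hβL hβZ
  let E : Fin n → Set (StarOmega n) := fun j =>
    if j = i then starFree Z i else {ω | ω ∈ offCenterEdge Z i j ↔ j ∈ D}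
  have hE : ∀ j, DependsOn (· ∈ E j) {k | starBlock i k = j} := by
    intro j
    by_cases hj : j = i
    · subst hj
      simpa [E] using dependsOn_starFree Z j
    · intro ω ω' h
      simp only [E, hj, if_false, mem_ofPred_eq]
      exact congrArg (· ↔ j ∈ D) (dependsOn_offCenterEdge Z hj h)
  have hinter : starFree Z i ∩ {ω | ∀ j ∈ univ.erase i, ω ∈ offCenterEdge Z i j ↔ j ∈ D}
      = ⋂ j, E j := by
    ext ω
    simp only [mem_inter_iff, mem_ofPred_eq, mem_iInter, Finset.mem_erase, Finset.mem_univ,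
      and_true, E]
    constructor
    · rintro ⟨hω, h⟩ j
      split_ifs with hj
      exacts [hω, h j hj]
    · intro h
      exact ⟨by simpa using h i, fun j hj => by simpa [hj] using h j⟩
  rw [hinter, show starSugm n βL βZ (⋂ j, E j) = ∏ j, starSugm n βL βZ (E j) from
      measure_pi_iInter_of_dependsOn _ (starBlock i) E hE,
    ← Finset.mul_prod_erase _ _ (Finset.mem_univ i)]
  refine congrArg₂ _ (by simp [E]) (Finset.prod_congr rfl fun j hj => ?_)
  simp [E, Finset.ne_of_mem_erase hj]

theorem starSugm_starFree_inter_pattern {βL βZ : ℝ} (hβL : βL ∈ Icc (0 : ℝ) 1)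
    (hβZ : βZ ∈ Icc (0 : ℝ) 1) {Z d : ℕ} (hZ : 1 ≤ Z) {i : Fin n} {D : Finset (Fin n)}
    (hD : D ∈ powersetCard d (univ.erase i)) :
    starSugm n βL βZ (starFree Z i ∩ {ω | ∀ j ∈ univ.erase i, ω ∈ offCenterEdge Z i j ↔ j ∈ D})
      = ENNReal.ofReal (1 - βZ) ^ (n - 1).choose Z *
        (ENNReal.ofReal (offCenterEdgeProb n Z βL βZ) ^ d *
          ENNReal.ofReal (1 - offCenterEdgeProb n Z βL βZ) ^ (n - 1 - d)) := by
  obtain ⟨hsub, rfl⟩ := mem_powersetCard.mp hD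
  have hedge : ∀ j ∈ univ.erase i, starSugm n βL βZ {ω | ω ∈ offCenterEdge Z i j ↔ j ∈ D}
      = if j ∈ D then ENNReal.ofReal (offCenterEdgeProb n Z βL βZ)
        else ENNReal.ofReal (1 - offCenterEdgeProb n Z βL βZ) := by
    intro j hj
    have hji := Finset.ne_of_mem_erase hj
    by_cases hjD : j ∈ D
    · simp only [hjD, iff_true, if_true, ofPred_mem_eq]
      exact starSugm_offCenterEdge hβL hβZ hZ hji
    · simp only [hjD, iff_false, if_false]
      exact starSugm_compl_offCenterEdge hβL hβZ hZ hji
  have hsplit : #{j ∈ univ.erase i | j ∈ D} = #D ∧ #{j ∈ univ.erase i | j ∉ D} = n - 1 - #D := by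
    rw [Finset.filter_mem_eq_inter, Finset.inter_eq_right.mpr hsub, Finset.filter_not,
      Finset.filter_mem_eq_inter, Finset.inter_eq_right.mpr hsub, Finset.card_sdiff_of_subset hsub,
      Finset.card_erase_of_mem (Finset.mem_univ i), Finset.card_univ, Fintype.card_fin]
    exact ⟨rfl, rfl⟩
  rw [starSugm_starFree_inter_pattern_eq_mul_prod hβL hβZ, starSugm_starFree hβL hβZ,
    Finset.prod_congr rfl hedge, Finset.prod_ite, Finset.prod_const, Finset.prod_const,
    hsplit.1, hsplit.2]

theorem offCenterEdgeProb_mem_Icc {βL βZ : ℝ} (hβL : βL ∈ Icc (0 : ℝ) 1)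
    (hβZ : βZ ∈ Icc (0 : ℝ) 1) (n Z : ℕ) : offCenterEdgeProb n Z βL βZ ∈ Icc (0 : ℝ) 1 := by
  have hq : (1 - βZ) ^ (n - 2).choose (Z - 1) ∈ Icc (0 : ℝ) 1 :=
    ⟨pow_nonneg (sub_nonneg.mpr hβZ.2) _, pow_le_one₀ (sub_nonneg.mpr hβZ.2) (by linarith [hβZ.1])⟩
  constructor
  · exact add_nonneg hβL.1 (mul_nonneg (sub_nonneg.mpr hβL.2) (sub_nonneg.mpr hq.2))
  · rw [← sub_nonneg, one_sub_offCenterEdgeProb]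
    exact mul_nonneg (sub_nonneg.mpr hβL.2) hq.1

end StarModel

theorem stmt16_general (n Z : ℕ) (βL βZ : ℝ)
    (hβL : βL ∈ Set.Icc (0 : ℝ) 1) (hβZ : βZ ∈ Set.Icc (0 : ℝ) 1)
    (i : Fin n) (d : ℕ) (hd : d < Z) :
    starSugm n βL βZ {ω | starDegree Z ω i = d} =
      ENNReal.ofReal
        (((n - 1).choose d : ℝ) *
          (βL + (1 - βL) * (1 - (1 - βZ) ^ ((n - 2).choose (Z - 1)))) ^ d *
          (1 - (βL + (1 - βL) * (1 - (1 - βZ) ^ ((n - 2).choose (Z - 1))))) ^ (n - 1 - d) *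
          (1 - βZ) ^ ((n - 1).choose Z)) := by
  have hp := offCenterEdgeProb_mem_Icc hβL hβZ n Z
  rw [setOf_starDegree_eq hd, measure_inter_setOf_card_filter_eq,
    Finset.sum_congr rfl fun D hD => starSugm_starFree_inter_pattern hβL hβZ (by omega) hD,
    Finset.sum_const, Finset.card_powersetCard, Finset.card_erase_of_mem (Finset.mem_univ i),
    Finset.card_univ, Fintype.card_fin, nsmul_eq_mul]
  change _ = ENNReal.ofReal (((n - 1).choose d : ℝ) * offCenterEdgeProb n Z βL βZ ^ d *
    (1 - offCenterEdgeProb n Z βL βZ) ^ (n - 1 - d) * (1 - βZ) ^ ((n - 1).choose Z))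
  rw [ENNReal.ofReal_mul (by positivity [hp.1, sub_nonneg.mpr hp.2]),
    ENNReal.ofReal_mul (by positivity [hp.1]), ENNReal.ofReal_mul (by positivity),
    ENNReal.ofReal_natCast, ENNReal.ofReal_pow hp.1, ENNReal.ofReal_pow (sub_nonneg.mpr hp.2),
    ENNReal.ofReal_pow (sub_nonneg.mpr hβZ.2)]
  ring

/-- degree distribution in the links and `Z`-stars SUGM.  For `n > Z ≥ 2`,
`βL, βZ ∈ [0,1]`, every node `i` and every `d` with `0 ≤ d < Z`, the probability that `i`
has degree exactly `d` equals
`C(n-1,d) ⬝ π^d ⬝ (1-π)^(n-1-d) ⬝ (1-βZ)^(C(n-1,Z))` with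
`π = βL + (1-βL)(1-(1-βZ)^(C(n-2,Z-1)))`. -/
theorem stmt16 (n Z : ℕ) (hZ : 2 ≤ Z) (hnZ : Z < n) (βL βZ : ℝ)
    (hβL : βL ∈ Set.Icc (0 : ℝ) 1) (hβZ : βZ ∈ Set.Icc (0 : ℝ) 1)
    (i : Fin n) (d : ℕ) (hd : d < Z) :
    starSugm n βL βZ {ω | starDegree Z ω i = d} =
      ENNReal.ofReal
        (((n - 1).choose d : ℝ) *
          (βL + (1 - βL) * (1 - (1 - βZ) ^ ((n - 2).choose (Z - 1)))) ^ d *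
          (1 - (βL + (1 - βL) * (1 - (1 - βZ) ^ ((n - 2).choose (Z - 1))))) ^ (n - 1 - d) *
          (1 - βZ) ^ ((n - 1).choose Z)) :=
  stmt16_general n Z βL βZ hβL hβZ i d hd
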